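/- arXiv:2404.05097 — 3 statements merged into one kernel-verified Lean document; each statement's English description precedes it below -/
import Mathlib

section
/- Hyper Hoare Logic triples are characterized by whp: for hyperpredicates ψψ, φφ ⊆ P(Σ) and a non-probabilistic (Boolean-semiring) program C, the HHL triple ⦃ψψ⦄ C ⦃φφ⦄ is valid (i.e., for every set of states S, S ∈ ψψ implies sp⟦C⟧(S) ∈ φφ) if and only if the support of the hyper Iverson bracket [ψψ] is contained in the support of whp⟦C⟧([φφ]). -/
namespace HHL

variable {State : Type}

/-- Strongest post (reachable states) of a nondeterministic program given by
its relational semantics `R`. -/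
def sp (R : State → State → Prop) (S : Set State) : Set State :=
  {τ | ∃ σ ∈ S, R σ τ}

/-- Hyper Iverson bracket of a hyperpredicate: `+∞` if the set belongs to the
hyperpredicate, `0` otherwise. (Quantities over the Boolean semiring are
identified with subsets of `State` via their support.) -/
noncomputable def hyperIverson (φφ : Set (Set State)) : Set State → ENNReal := by
  classical exact fun S => if S ∈ φφ then ⊤ else 0

/-- Support of a hyperquantity. -/
def hsupp (ff : Set State → ENNReal) : Set (Set State) := {S | 0 < ff S}

/-- Weakest hyper pre for Boolean programs: `whp⟦C⟧(ff)(S) = ff(sp⟦C⟧(S))`. -/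
noncomputable def whp (R : State → State → Prop) (ff : Set State → ENNReal) :
    Set State → ENNReal :=
  fun S => ff (sp R S)

/-- Subsumption of Hyper Hoare Logic: the HHL triple `⦃ψψ⦄ C ⦃φφ⦄` is valid iff
`supp [ψψ] ⊆ supp (whp⟦C⟧[φφ])`. -/
theorem hhl_subsumption (R : State → State → Prop) (ψψ φφ : Set (Set State)) :
    (∀ S : Set State, S ∈ ψψ → sp R S ∈ φφ) ↔
      hsupp (hyperIverson ψψ) ⊆ hsupp (whp R (hyperIverson φφ)) := by
  constructor
  · intro h S hS
    simp only [hsupp, hyperIverson, whp, Set.mem_setOf_eq] at *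
    split at hS
    · next hmem =>
      rw [if_pos (h S hmem)]; simp
    · simp at hS
  · intro h S hS
    have : S ∈ hsupp (hyperIverson ψψ) := by
      simp [hsupp, hyperIverson, hS]
    have := h this
    simp only [hsupp, whp, hyperIverson, Set.mem_setOf_eq] at this
    by_contra hc
    rw [if_neg hc] at this
    exact lt_irrefl 0 this

end HHL
end

section
/- Incorrectness Logic is falsified via partial incorrectness, and conversely: the incorrectness triple [P] C [Q] (i.e., Q ⊆ sp⟦C⟧(P)) holds if and only if for every state σ ∈ Q the partial incorrectness triple [¬P] C [{σ}] (i.e., {σ} ⊆ slp⟦C⟧(¬P)) fails. -/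
namespace Triples

variable {State : Type}

/-- Strongest postcondition of a nondeterministic program with relational
semantics `R`. -/
def sp (R : State → State → Prop) (P : Set State) : Set State :=
  {τ | ∃ σ ∈ P, R σ τ}

/-- Strongest liberal postcondition. -/
def slp (R : State → State → Prop) (P : Set State) : Set State :=
  {τ | ∀ σ, R σ τ → σ ∈ P}

/-- Falsifying (total) incorrectness via partial incorrectness:
`[P] C [Q]` (i.e. `Q ⊆ sp⟦C⟧(P)`) holds iff for every `σ ∈ Q` the partial
incorrectness triple `⟨¬P⟩ C ⟨{σ}⟩` (i.e. `{σ} ⊆ slp⟦C⟧(¬P)`) fails. -/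
theorem incorrectness_iff_falsify_partial_incorrectness (R : State → State → Prop)
    (P Q : Set State) :
    Q ⊆ sp R P ↔ ∀ σ ∈ Q, ¬ (({σ} : Set State) ⊆ slp R Pᶜ) := by
  constructor
  · rintro h σ hσ hc
    obtain ⟨σ', hσ', hR⟩ := h hσ
    exact hc rfl σ' hR hσ'
  · intro h τ hτ
    by_contra hc
    exact h τ hτ (fun x hx σ hR => by cases hx; exact by_contra fun hP => hc ⟨σ, not_not.mp (by simpa using hP), hR⟩)

end Triples
end

section
/- whp with the expected-value hyperquantity subsumes probabilistic wp and wlp: over the partial probability semiring ⟨[0,1], +, ·, 0, 1⟩, for any deterministic-or-probabilistic (non-nondeterministic) program C, quantity f, and state σ, whp⟦C⟧(E[f])(δσ) = wp⟦C⟧(f)(σ) and whp⟦C⟧(E[f] + 1 − E[1])(δσ) = wlp⟦C⟧(f)(σ), where E[f] = λμ. Σ_τ f(τ)·μ(τ). -/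
namespace SubsumeProb

variable {State : Type}

/-- The Dirac distribution at `σ`. -/
noncomputable def delta (σ : State) : State → ENNReal := by
  classical exact fun τ => if τ = σ then 1 else 0

/-- Strongest post over the probability semiring: the (sub)distribution of
final states, `sp⟦C⟧(μ)(τ) = Σ_σ μ(σ)·⟦C⟧(σ,τ)`. -/
noncomputable def sp (sem : State → State → ENNReal) (μ : State → ENNReal) :
    State → ENNReal :=
  fun τ => ∑' σ, μ σ * sem σ τ

/-- Kaminski's probabilistic weakest preexpectation:
`wp⟦C⟧(f)(σ) = Σ_τ ⟦C⟧(σ,τ)·f(τ)`. -/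
noncomputable def wp (sem : State → State → ENNReal) (f : State → ENNReal)
    (σ : State) : ENNReal :=
  ∑' τ, sem σ τ * f τ

/-- Probabilistic weakest liberal preexpectation:
`wlp⟦C⟧(f)(σ) = wp⟦C⟧(f)(σ) + 1 − wp⟦C⟧(1)(σ)`. -/
noncomputable def wlp (sem : State → State → ENNReal) (f : State → ENNReal)
    (σ : State) : ENNReal :=
  wp sem f σ + 1 - wp sem (fun _ => 1) σ

/-- The expected-value hyperquantity `E[f] = λμ. Σ_τ f(τ)·μ(τ)`. -/
noncomputable def Exp (f : State → ENNReal) : (State → ENNReal) → ENNReal :=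
  fun μ => ∑' τ, f τ * μ τ

/-- `whp⟦C⟧(ff)(μ) = ff(sp⟦C⟧(μ))`. -/
noncomputable def whp (sem : State → State → ENNReal)
    (ff : (State → ENNReal) → ENNReal) : (State → ENNReal) → ENNReal :=
  fun μ => ff (sp sem μ)

lemma sp_delta (sem : State → State → ENNReal) (σ τ : State) :
    sp sem (delta σ) τ = sem σ τ := by
  classical
  unfold sp delta
  rw [tsum_eq_single σ]
  · simp
  · intro b hb; simp [hb]

lemma exp_sp_delta (sem : State → State → ENNReal) (f : State → ENNReal) (σ : State) :
    Exp f (sp sem (delta σ)) = wp sem f σ := by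
  unfold Exp wp
  refine tsum_congr fun τ => ?_
  rw [sp_delta, mul_comm]

/-- Subsumption of probabilistic wp and wlp: over the probability semiring
`⟨[0,1], +, ·, 0, 1⟩` (the program `C` is a sub-stochastic, i.e.
non-nondeterministic, probabilistic program), for any quantity `f` and
state `σ`: `whp⟦C⟧(E[f])(δσ) = wp⟦C⟧(f)(σ)` and
`whp⟦C⟧(E[f] + 1 − E[1])(δσ) = wlp⟦C⟧(f)(σ)`. -/
theorem whp_subsumes_prob_wp_wlp (sem : State → State → ENNReal)
    (hval : ∀ σ τ, sem σ τ ≤ 1) (hsub : ∀ σ, (∑' τ, sem σ τ) ≤ 1)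
    (f : State → ENNReal) (σ : State) :
    whp sem (Exp f) (delta σ) = wp sem f σ ∧
      whp sem (fun μ => Exp f μ + 1 - Exp (fun _ => 1) μ) (delta σ) = wlp sem f σ := by
  constructor
  · exact exp_sp_delta sem f σ
  · show Exp f (sp sem (delta σ)) + 1 - Exp (fun _ => 1) (sp sem (delta σ)) = _
    rw [exp_sp_delta, exp_sp_delta, wlp]

end SubsumeProb
end
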